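/- Let n ≥ 2 and let U : [−1,1] → ℝ be strictly concave and strictly increasing, and let r̂ = (r̂₁,…,r̂ₙ) be the unique maximizer of S(r₁,…,rₙ) = Σ_{1≤i<j≤n} U(r_i − r_j) over [0,1]ⁿ. Then 1 − r̂_i = r̂_{n−i+1} for every 1 ≤ i ≤ n. -/

import Mathlib

open Finset

/-!
The reflection `r ↦ (1 - r_{n-i+1})ᵢ` (written `reflect`, with `Fin.rev i` the index `n-i+1`)
maps the cube to itself and preserves `S`. By strict concavity of `U`, `S` at the midpoint of
`r` and its reflection strictly exceeds their common value unless all differences `rᵢ - rⱼ`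
agree, so the maximizer differs from its reflection by a constant. Strict monotonicity of `U`
forces every maximizer to have `r₁ = 1`; applied to the reflection, itself a maximizer, this
gives `rₙ = 0`, so the constant vanishes.
-/

theorem Fin.sum_sum_Ioi_rev {M : Type*} [AddCommMonoid M] {n : ℕ} (f : Fin n → Fin n → M) :
    ∑ i : Fin n, ∑ j ∈ Ioi i, f j.rev i.rev = ∑ i, ∑ j ∈ Ioi i, f i j := by
  calc ∑ i : Fin n, ∑ j ∈ Ioi i, f j.rev i.rev = ∑ i, ∑ j ∈ Iio i, f j i := by
        refine Fintype.sum_equiv Fin.revPerm _ _ fun i => ?_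
        rw [Fin.revPerm_apply, ← Fin.map_revPerm_Ioi, sum_map]
        simp
    _ = ∑ i, ∑ j ∈ Ioi i, f i j := by
        refine sum_comm' fun i j => ?_
        simp

def pairSum (U : ℝ → ℝ) {n : ℕ} (r : Fin n → ℝ) : ℝ := ∑ i, ∑ j ∈ Ioi i, U (r i - r j)

def reflect {n : ℕ} (r : Fin n → ℝ) : Fin n → ℝ := fun i => 1 - r i.rev

section
variable {n : ℕ} {r u : Fin n → ℝ}

theorem pairSum_reflect (U : ℝ → ℝ) (r : Fin n → ℝ) : pairSum U (reflect r) = pairSum U r := by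
  rw [pairSum, pairSum, ← Fin.sum_sum_Ioi_rev]
  simp [reflect]

theorem reflect_mem_Icc (hr : r ∈ Set.Icc 0 1) : reflect r ∈ Set.Icc 0 1 :=
  ⟨fun i => sub_nonneg.2 (hr.2 i.rev), fun i => sub_le_self _ (hr.1 i.rev)⟩

theorem sub_mem_Icc_of_mem_Icc (hr : r ∈ Set.Icc 0 1) (i j : Fin n) :
    r i - r j ∈ Set.Icc (-1 : ℝ) 1 := by
  have hi0 : 0 ≤ r i := hr.1 i
  have hj0 : 0 ≤ r j := hr.1 j
  have hi1 : r i ≤ 1 := hr.2 i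
  have hj1 : r j ≤ 1 := hr.2 j
  constructor <;> linarith

theorem pairSum_lt_of_strictConcaveOn {U : ℝ → ℝ} {s : Set ℝ} (hU : StrictConcaveOn ℝ s U)
    (hr : ∀ i j, r i - r j ∈ s) (hu : ∀ i j, u i - u j ∈ s) {a b : ℝ} (ha : 0 < a) (hb : 0 < b)
    (hab : a + b = 1) (hne : ∃ i j, i < j ∧ r i - r j ≠ u i - u j) :
    a * pairSum U r + b * pairSum U u < pairSum U (a • r + b • u) := by
  have hsub : ∀ i j,
      (a • r + b • u) i - (a • r + b • u) j = a • (r i - r j) + b • (u i - u j) := by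
    intro i j; simp only [Pi.add_apply, Pi.smul_apply, smul_eq_mul]; ring
  obtain ⟨i₀, j₀, hij, hne⟩ := hne
  simp only [pairSum, mul_sum, ← sum_add_distrib, hsub]
  refine sum_lt_sum (fun i _ => sum_le_sum fun j _ => ?_) ⟨i₀, mem_univ _, ?_⟩
  · exact hU.concaveOn.2 (hr i j) (hu i j) ha.le hb.le hab
  · refine sum_lt_sum (fun j _ => hU.concaveOn.2 (hr i₀ j) (hu i₀ j) ha.le hb.le hab)
      ⟨j₀, mem_Ioi.2 hij, hU.2 (hr i₀ j₀) (hu i₀ j₀) hne ha hb hab⟩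

theorem IsMaxOn.sub_eq_sub_of_pairSum_eq {U : ℝ → ℝ}
    (hU : StrictConcaveOn ℝ (Set.Icc (-1) 1) U) (hmax : IsMaxOn (pairSum U) (Set.Icc 0 1) r)
    (hr : r ∈ Set.Icc 0 1) (hu : u ∈ Set.Icc 0 1) (hsum : pairSum U u = pairSum U r)
    {i j : Fin n} (hij : i < j) : r i - r j = u i - u j := by
  by_contra hne
  have hmid := (convex_Icc (0 : Fin n → ℝ) 1) hr hu one_half_pos.le one_half_pos.le
    (add_halves (1 : ℝ))
  have := pairSum_lt_of_strictConcaveOn hU (sub_mem_Icc_of_mem_Icc hr)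
    (sub_mem_Icc_of_mem_Icc hu) one_half_pos one_half_pos (add_halves 1) ⟨i, j, hij, hne⟩
  linarith [isMaxOn_iff.1 hmax _ hmid]

end

theorem pairSum_lt_update_zero {m : ℕ} {U : ℝ → ℝ} (hU : StrictMonoOn U (Set.Icc (-1) 1))
    {r : Fin (m + 2) → ℝ} (hr : r ∈ Set.Icc 0 1) {b : ℝ} (hlt : r 0 < b) (hb : b ≤ 1) :
    pairSum U r < pairSum U (Function.update r 0 b) := by
  have hterm : ∀ j, U (r 0 - r j) < U (b - r j) := by
    intro j
    have hd := sub_mem_Icc_of_mem_Icc hr 0 j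
    have hj : 0 ≤ r j := hr.1 j
    exact hU hd ⟨by linarith [hd.1], by linarith⟩ (by linarith)
  refine sum_lt_sum (fun i _ => sum_le_sum fun j hj => ?_)
    ⟨0, mem_univ _, sum_lt_sum_of_nonempty ⟨1, by simp⟩ fun j hj => ?_⟩
  · have hj0 : j ≠ 0 := (mem_Ioi.1 hj).ne_bot
    rcases eq_or_ne i 0 with rfl | hi0
    · simpa [hj0] using (hterm j).le
    · simp [hi0, hj0]
  · simpa [(mem_Ioi.1 hj).ne'] using hterm j

theorem IsMaxOn.apply_zero_eq_one {m : ℕ} {U : ℝ → ℝ} (hU : StrictMonoOn U (Set.Icc (-1) 1))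
    {r : Fin (m + 2) → ℝ} (hmax : IsMaxOn (pairSum U) (Set.Icc 0 1) r) (hr : r ∈ Set.Icc 0 1) :
    r 0 = 1 := by
  refine (hr.2 0).antisymm (not_lt.1 fun hlt => ?_)
  have hw : Function.update r 0 1 ∈ Set.Icc 0 1 :=
    ⟨le_update_iff.2 ⟨zero_le_one, fun j _ => hr.1 j⟩, update_le_iff.2 ⟨le_rfl, fun j _ => hr.2 j⟩⟩
  exact (pairSum_lt_update_zero hU hr hlt le_rfl).not_ge (isMaxOn_iff.1 hmax _ hw)

theorem IsMaxOn.reflect_eq {m : ℕ} {U : ℝ → ℝ} (hUconc : StrictConcaveOn ℝ (Set.Icc (-1) 1) U)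
    (hUmono : StrictMonoOn U (Set.Icc (-1) 1)) {r : Fin (m + 2) → ℝ}
    (hmax : IsMaxOn (pairSum U) (Set.Icc 0 1) r) (hr : r ∈ Set.Icc 0 1) : reflect r = r := by
  have hsum := pairSum_reflect U r
  have hmem := reflect_mem_Icc hr
  have hmax' : IsMaxOn (pairSum U) (Set.Icc 0 1) (reflect r) :=
    isMaxOn_iff.2 fun u hu => (isMaxOn_iff.1 hmax u hu).trans_eq hsum.symm
  have h0 := hmax.apply_zero_eq_one hUmono hr
  have h0' := hmax'.apply_zero_eq_one hUmono hmem
  funext i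
  rcases eq_or_ne i 0 with rfl | hi
  · rw [h0, h0']
  · have := hmax.sub_eq_sub_of_pairSum_eq hUconc hr hmem hsum (Fin.pos_of_ne_zero hi)
    linarith

/-- If `U` is strictly concave and strictly increasing on `[-1,1]`
and `r` is the (unique) maximizer of `S(r) = ∑_{i<j} U(r_i - r_j)` over `[0,1]^n`,
then `1 - r_i = r_{n-i+1}` for all `i` (here `Fin.rev i` is the index `n-i+1`
in one-based notation). -/
theorem stmt3 (n : ℕ) (hn : 2 ≤ n) (U : ℝ → ℝ)
    (hUconc : StrictConcaveOn ℝ (Set.Icc (-1 : ℝ) 1) U)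
    (hUmono : StrictMonoOn U (Set.Icc (-1 : ℝ) 1))
    (r : Fin n → ℝ) (hr : ∀ i, r i ∈ Set.Icc (0 : ℝ) 1)
    (hropt : ∀ u : Fin n → ℝ, (∀ i, u i ∈ Set.Icc (0 : ℝ) 1) →
      (∑ i : Fin n, ∑ j ∈ Finset.Ioi i, U (u i - u j)) ≤
        ∑ i : Fin n, ∑ j ∈ Finset.Ioi i, U (r i - r j)) :
    ∀ i : Fin n, 1 - r i = r i.rev := by
  obtain ⟨m, rfl⟩ : ∃ m, n = m + 2 := ⟨n - 2, by omega⟩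
  have hmem : r ∈ Set.Icc 0 1 := ⟨fun i => (hr i).1, fun i => (hr i).2⟩
  have hmax : IsMaxOn (pairSum U) (Set.Icc 0 1) r :=
    isMaxOn_iff.2 fun u hu => hropt u fun i => ⟨hu.1 i, hu.2 i⟩
  intro i
  have := congrFun (hmax.reflect_eq hUconc hUmono hmem) i.rev
  simp only [reflect, Fin.rev_rev] at this
  linarith
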